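/- For any q ∈ [0,1]: α·q_α(B_q) ≤ π̂_α·q, with equality if and only if h·q = 0. -/

import Mathlib

open Finset

attribute [local instance] Classical.propDecidable

/-- The `i`-th smallest (1-indexed) element of the multiset of p-values `{p_j : j ∈ I}`. -/
noncomputable def pOrd {m : ℕ} (p : Fin m → ℝ) (I : Finset (Fin m)) (i : ℕ) : ℝ :=
  ((I.val.map p).sort (· ≤ ·)).getD (i - 1) 0

/-- The Simes local test rejects `H_I` (written `I ∈ 𝒰`) iff `I` is nonempty and
`|I|·p_{(i:I)} ≤ i·α` for at least one `1 ≤ i ≤ |I|`. -/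
def SimesU {m : ℕ} (α : ℝ) (p : Fin m → ℝ) (I : Finset (Fin m)) : Prop :=
  ∃ i, 1 ≤ i ∧ i ≤ I.card ∧ (I.card : ℝ) * pOrd p I i ≤ (i : ℝ) * α

/-- Closed testing rejects `H_I` (written `I ∈ 𝒳`) iff `J ∈ 𝒰` for every `J ⊇ I`. -/
def ClosedX {m : ℕ} (α : ℝ) (p : Fin m → ℝ) (I : Finset (Fin m)) : Prop :=
  ∀ J, I ⊆ J → SimesU α p J

/-- `K_i = {r_{m−i+1},…,r_m}`: the `i` indices with largest p-values. -/
def Kset {m : ℕ} (r : Fin m → Fin m) (i : ℕ) : Finset (Fin m) :=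
  (Finset.univ.filter fun j : Fin m => m - i ≤ (j : ℕ)).image r

/-- `L_i = {r_1,…,r_i}`: the `i` indices with smallest p-values. -/
def Lset {m : ℕ} (r : Fin m → Fin m) (i : ℕ) : Finset (Fin m) :=
  (Finset.univ.filter fun j : Fin m => (j : ℕ) < i).image r

/-- `h = max{0 ≤ i ≤ m : K_i ∉ 𝒰}`. -/
noncomputable def hval {m : ℕ} (α : ℝ) (p : Fin m → ℝ) (r : Fin m → Fin m) : ℕ :=
  sSup {i | i ≤ m ∧ ¬ SimesU α p (Kset r i)}

/-- `t(S) = max{|I| : I ⊆ S, I ∉ 𝒳}`. -/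
noncomputable def tval {m : ℕ} (α : ℝ) (p : Fin m → ℝ) (S : Finset (Fin m)) : ℕ :=
  sSup {k | ∃ I, I ⊆ S ∧ ¬ ClosedX α p I ∧ I.card = k}

/-- `d(S) = |S| − t(S)`. -/
noncomputable def dval {m : ℕ} (α : ℝ) (p : Fin m → ℝ) (S : Finset (Fin m)) : ℕ :=
  S.card - tval α p S

/-- `q_α(S) = t(S)/|S|` for nonempty `S`, and `0` for `S = ∅`. -/
noncomputable def qval {m : ℕ} (α : ℝ) (p : Fin m → ℝ) (S : Finset (Fin m)) : ℝ :=
  if S = ∅ then 0 else (tval α p S : ℝ) / S.card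

/-- `z = 0` if `h = m`, else `z = min{m−h ≤ i ≤ m : h·p_{(i)} ≤ (i−m+h+1)·α}`. -/
noncomputable def zval {m : ℕ} (α : ℝ) (p : Fin m → ℝ) (r : Fin m → Fin m) : ℕ :=
  if hval α p r = m then 0 else
    sInf {i | m - hval α p r ≤ i ∧ i ≤ m ∧
      (hval α p r : ℝ) * pOrd p Finset.univ i ≤ ((i : ℝ) - m + hval α p r + 1) * α}

/-- `b_q = max{1 ≤ i ≤ m : m·p_{(i)} ≤ i·q}` (with `b_q = 0` if no such `i`). -/
noncomputable def bval {m : ℕ} (q : ℝ) (p : Fin m → ℝ) : ℕ :=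
  sSup {i | 1 ≤ i ∧ i ≤ m ∧ (m : ℝ) * pOrd p Finset.univ i ≤ (i : ℝ) * q}

/-!
Closed testing fails to reject some `I ⊆ B_q` with `|I| = t = t(B_q)`, so `I ⊆ J` for some
`J ∉ 𝒰`. The order statistics of `J` are dominated by those of `K_{|J|}`, hence `K_{|J|} ∉ 𝒰`
and `|J| ≤ h`. If `t ≥ 1`, non-rejection of `J` by Simes at index `t`, together with
`p_j ≤ p_{(b_q)}` on `B_q` and `m·p_{(b_q)} ≤ b_q·q`, gives
`t·α < |J|·p_{(t:J)} ≤ h·p_{(b_q)} ≤ h·b_q·q/m`: the inequality is strict and `h·q > 0`.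
If `t = 0` the left side vanishes.
-/

theorem List.Pairwise.getElem_le_iff_lt_countP {α : Type*} [LinearOrder α] {l : List α}
    (hl : l.Pairwise (· ≤ ·)) {k : ℕ} (hk : k < l.length) {c : α} :
    l[k] ≤ c ↔ k < l.countP (· ≤ c) := by
  induction l generalizing k with
  | nil => simp at hk
  | cons a l ih =>
    rw [List.pairwise_cons] at hl
    by_cases ha : a ≤ c
    · cases k with
      | zero => simp [ha]
      | succ k => simp [ha, ih hl.2 (by simpa using hk)]
    · have hl_gt : ∀ b ∈ l, ¬ b ≤ c := fun b hb hbc => ha ((hl.1 b hb).trans hbc)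
      have hzero : (a :: l).countP (· ≤ c) = 0 := by simpa [ha] using hl_gt
      rw [hzero]
      cases k with
      | zero => simpa using ha
      | succ k => simpa using hl_gt _ (List.getElem_mem _)

section OrderStatistic

variable {m : ℕ} {p : Fin m → ℝ} {I J : Finset (Fin m)} {k : ℕ} {c : ℝ}

theorem pOrd_le_iff (h1 : 1 ≤ k) (h2 : k ≤ #I) :
    pOrd p I k ≤ c ↔ k ≤ #{x ∈ I | p x ≤ c} := by
  have hlen : ((I.val.map p).sort (· ≤ ·)).length = #I := by simp
  have hcount : ((I.val.map p).sort (· ≤ ·)).countP (· ≤ c) = #{x ∈ I | p x ≤ c} := by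
    rw [← Multiset.coe_countP, Multiset.sort_eq, Multiset.countP_map]; rfl
  rw [pOrd, List.getD_eq_getElem _ _ (by omega),
    (Multiset.pairwise_sort _ _).getElem_le_iff_lt_countP, hcount]
  omega

theorem pOrd_le_of_forall_le (h : ∀ x ∈ I, p x ≤ c) (h1 : 1 ≤ k) (h2 : k ≤ #I) :
    pOrd p I k ≤ c := by
  rwa [pOrd_le_iff h1 h2, filter_true_of_mem h]

theorem pOrd_le_pOrd_of_subset (hIJ : I ⊆ J) (h1 : 1 ≤ k) (h2 : k ≤ #I) :
    pOrd p J k ≤ pOrd p I k := by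
  rw [pOrd_le_iff h1 (h2.trans (card_le_card hIJ))]
  exact ((pOrd_le_iff h1 h2).1 le_rfl).trans (card_le_card (filter_subset_filter _ hIJ))

theorem pOrd_le_pOrd_of_compl_le (hcard : #J = #I) (hI : ∀ x ∉ I, ∀ y ∈ I, p x ≤ p y)
    (h1 : 1 ≤ k) (h2 : k ≤ #I) : pOrd p J k ≤ pOrd p I k := by
  set c := pOrd p I k
  have hIc : k ≤ #{x ∈ I | p x ≤ c} := (pOrd_le_iff h1 h2).1 le_rfl
  obtain ⟨y, hy⟩ : {x ∈ I | p x ≤ c}.Nonempty := card_pos.1 (by omega)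
  rw [mem_filter] at hy
  have hgt : {x ∈ J | ¬ p x ≤ c} ⊆ {x ∈ I | ¬ p x ≤ c} := by
    intro x hx
    simp only [mem_filter] at hx ⊢
    refine ⟨?_, hx.2⟩
    by_contra hxI
    exact hx.2 ((hI x hxI y hy.1).trans hy.2)
  have hJsplit := card_filter_add_card_filter_not (s := J) (fun x => p x ≤ c)
  have hIsplit := card_filter_add_card_filter_not (s := I) (fun x => p x ≤ c)
  rw [pOrd_le_iff h1 (hcard ▸ h2)]
  have := card_le_card hgt
  omega

theorem apply_le_pOrd_univ_card (hL : ∀ x ∈ I, ∀ y ∉ I, p x ≤ p y) {x : Fin m} (hx : x ∈ I) :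
    p x ≤ pOrd p univ #I := by
  by_contra! hlt
  have hcount := (pOrd_le_iff (p := p) (card_pos.2 ⟨x, hx⟩) (card_le_univ I)).1 le_rfl
  have hsub : {y ∈ (univ : Finset (Fin m)) | p y ≤ pOrd p univ #I} ⊆ I.erase x := by
    intro y hy
    rw [mem_filter] at hy
    refine mem_erase.2 ⟨fun hyx => ?_, ?_⟩
    · subst hyx; linarith [hy.2]
    · by_contra hyI
      linarith [hL x hx y hyI, hy.2]
  have := card_le_card hsub
  rw [card_erase_of_mem hx] at this
  have := card_pos.2 ⟨x, hx⟩
  omega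

end OrderStatistic

section SortedSets

variable {m : ℕ} {p : Fin m → ℝ} {r : Fin m → Fin m}

theorem card_Lset (hr : Function.Injective r) {b : ℕ} (hb : b ≤ m) : #(Lset r b) = b := by
  rw [Lset, card_image_of_injective _ hr, Fin.card_filter_val_lt, min_eq_right hb]

theorem card_Kset (hr : Function.Injective r) {n : ℕ} (hn : n ≤ m) : #(Kset r n) = n := by
  have hsplit := card_filter_add_card_filter_not (s := (univ : Finset (Fin m)))
    (fun j : Fin m => m - n ≤ (j : ℕ))
  simp only [not_le, Fin.card_filter_val_lt, card_univ, Fintype.card_fin] at hsplit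
  rw [Kset, card_image_of_injective _ hr]
  omega

theorem Lset_zero : Lset r 0 = ∅ := by simp [Lset]

theorem apply_le_apply_of_mem_Lset (hr : Function.Bijective r) (hmono : Monotone (p ∘ r))
    {b : ℕ} {x y : Fin m} (hx : x ∈ Lset r b) (hy : y ∉ Lset r b) : p x ≤ p y := by
  obtain ⟨i, rfl⟩ := hr.2 x
  obtain ⟨j, rfl⟩ := hr.2 y
  simp only [Lset, hr.1.mem_finset_image, mem_filter, mem_univ, true_and] at hx hy
  exact hmono (Fin.le_def.2 (by omega))

theorem apply_le_apply_of_mem_Kset (hr : Function.Bijective r) (hmono : Monotone (p ∘ r))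
    {n : ℕ} {x y : Fin m} (hx : x ∉ Kset r n) (hy : y ∈ Kset r n) : p x ≤ p y := by
  obtain ⟨i, rfl⟩ := hr.2 x
  obtain ⟨j, rfl⟩ := hr.2 y
  simp only [Kset, hr.1.mem_finset_image, mem_filter, mem_univ, true_and] at hx hy
  exact hmono (Fin.le_def.2 (by omega))

end SortedSets

section ClosedTesting

variable {m : ℕ} {α : ℝ} {p : Fin m → ℝ} {r : Fin m → Fin m} {J S : Finset (Fin m)}

theorem not_simesU_empty : ¬ SimesU α p (∅ : Finset (Fin m)) := by
  rintro ⟨i, h1, h2, -⟩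
  simp at h2
  omega

theorem simesU_of_simesU_Kset (hr : Function.Bijective r) (hmono : Monotone (p ∘ r))
    (hK : SimesU α p (Kset r #J)) : SimesU α p J := by
  obtain ⟨i, h1, h2, hi⟩ := hK
  have hcard : #(Kset r #J) = #J := card_Kset hr.1 (card_finset_fin_le J)
  have hle : pOrd p J i ≤ pOrd p (Kset r #J) i :=
    pOrd_le_pOrd_of_compl_le hcard.symm
      (fun x hx y hy => apply_le_apply_of_mem_Kset hr hmono hx hy) h1 h2
  refine ⟨i, h1, hcard ▸ h2, ?_⟩
  rw [hcard] at hi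
  exact (mul_le_mul_of_nonneg_left hle (Nat.cast_nonneg _)).trans hi

theorem card_le_hval (hr : Function.Bijective r) (hmono : Monotone (p ∘ r))
    (hJ : ¬ SimesU α p J) : #J ≤ hval α p r :=
  le_csSup ⟨m, fun _ hi => hi.1⟩
    ⟨card_finset_fin_le J, fun hK => hJ (simesU_of_simesU_Kset hr hmono hK)⟩

theorem exists_not_closedX_card_eq_tval (S : Finset (Fin m)) :
    ∃ I ⊆ S, ¬ ClosedX α p I ∧ #I = tval α p S := by
  have hbdd : BddAbove {k | ∃ I, I ⊆ S ∧ ¬ ClosedX α p I ∧ #I = k} := by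
    refine ⟨#S, ?_⟩
    rintro _ ⟨I, hIS, -, rfl⟩
    exact card_le_card hIS
  have hempty : 0 ∈ {k | ∃ I, I ⊆ S ∧ ¬ ClosedX α p I ∧ #I = k} :=
    ⟨∅, empty_subset S, fun h => not_simesU_empty (h ∅ subset_rfl), card_empty⟩
  exact Nat.sSup_mem ⟨0, hempty⟩ hbdd

theorem tval_le_card (S : Finset (Fin m)) : tval α p S ≤ #S := by
  obtain ⟨I, hIS, -, hI⟩ := exists_not_closedX_card_eq_tval (α := α) (p := p) S
  exact hI ▸ card_le_card hIS

theorem tval_mul_lt_hval_mul (hα : 0 ≤ α) (hr : Function.Bijective r) (hmono : Monotone (p ∘ r))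
    {c : ℝ} (hS : ∀ x ∈ S, p x ≤ c) (ht : 0 < tval α p S) :
    (tval α p S : ℝ) * α < hval α p r * c := by
  obtain ⟨I, hIS, hI, hIt⟩ := exists_not_closedX_card_eq_tval (α := α) (p := p) S
  obtain ⟨J, hIJ, hJ⟩ : ∃ J, I ⊆ J ∧ ¬ SimesU α p J := by simpa [ClosedX] using hI
  set t := tval α p S
  have htJ : t ≤ #J := hIt ▸ card_le_card hIJ
  have hJt : (t : ℝ) * α < #J * pOrd p J t := by
    simp only [SimesU, not_exists, not_and, not_le] at hJ
    exact hJ t ht htJ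
  have hJc : pOrd p J t ≤ c :=
    (pOrd_le_pOrd_of_subset hIJ ht hIt.ge).trans
      (pOrd_le_of_forall_le (fun x hx => hS x (hIS hx)) ht hIt.ge)
  have hc : 0 ≤ c := by
    have : 0 ≤ (#J : ℝ) * pOrd p J t := (mul_nonneg (Nat.cast_nonneg t) hα).trans hJt.le
    exact (nonneg_of_mul_nonneg_right this (by exact_mod_cast (ht.trans_le htJ))).trans hJc
  have hJh : (#J : ℝ) ≤ hval α p r := by exact_mod_cast card_le_hval hr hmono hJ
  calc (t : ℝ) * α < #J * pOrd p J t := hJt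
    _ ≤ #J * c := by gcongr
    _ ≤ hval α p r * c := by gcongr

end ClosedTesting

section StepUp

variable {m : ℕ} {α : ℝ} {p : Fin m → ℝ} {r : Fin m → Fin m} {q : ℝ}

theorem bval_spec (hb : bval q p ≠ 0) :
    1 ≤ bval q p ∧ bval q p ≤ m ∧ (m : ℝ) * pOrd p univ (bval q p) ≤ bval q p * q := by
  have hbdd : BddAbove {i | 1 ≤ i ∧ i ≤ m ∧ (m : ℝ) * pOrd p univ i ≤ i * q} :=
    ⟨m, fun _ hi => hi.2.1⟩
  refine Nat.sSup_mem ?_ hbdd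
  by_contra hempty
  exact hb (by rw [bval, Set.not_nonempty_iff_eq_empty.1 hempty, csSup_empty]; rfl)

theorem mul_qval_Lset_bval_lt (hα : 0 ≤ α) (hr : Function.Bijective r)
    (hmono : Monotone (p ∘ r)) (ht : 0 < tval α p (Lset r (bval q p))) :
    α * qval α p (Lset r (bval q p)) < (hval α p r : ℝ) / m * q ∧
      0 < (hval α p r : ℝ) * q := by
  set b := bval q p
  set h := hval α p r
  have hB : (Lset r b).Nonempty := card_pos.1 (ht.trans_le (tval_le_card _))
  have hb : b ≠ 0 := fun hb0 => hB.ne_empty (by rw [hb0, Lset_zero])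
  obtain ⟨hb1, hbm, hbq⟩ := bval_spec hb
  have hcard : #(Lset r b) = b := card_Lset hr.1 hbm
  have htb := tval_mul_lt_hval_mul hα hr hmono (c := pOrd p univ b)
    (fun x hx => hcard ▸ apply_le_pOrd_univ_card
      (fun x hx y hy => apply_le_apply_of_mem_Lset hr hmono hx hy) hx) ht
  set t := tval α p (Lset r b)
  have hb0 : (0 : ℝ) < b := by exact_mod_cast hb1
  have hm0 : (0 : ℝ) < m := by exact_mod_cast hb1.trans hbm
  have hscaled : (t : ℝ) * α * m < h * q * b := by
    calc (t : ℝ) * α * m < h * pOrd p univ b * m := by gcongr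
      _ = h * (m * pOrd p univ b) := by ring
      _ ≤ h * (b * q) := by gcongr
      _ = h * q * b := by ring
  refine ⟨?_, ?_⟩
  · rw [qval, if_neg hB.ne_empty, hcard, mul_div_assoc', div_mul_eq_mul_div,
      div_lt_div_iff₀ hb0 hm0]
    linarith
  · have : 0 ≤ (t : ℝ) * α * m := by positivity
    nlinarith

end StepUp

theorem stmt13_general
    (m : ℕ) (hm : 1 ≤ m) (α : ℝ) (hα : 0 ≤ α ∧ α ≤ 1)
    (p : Fin m → ℝ)
    (r : Fin m → Fin m) (hr : Function.Bijective r)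
    (hmono : ∀ i j : Fin m, i ≤ j → p (r i) ≤ p (r j))
    (q : ℝ) (hq : 0 ≤ q ∧ q ≤ 1) :
    α * qval α p (Lset r (bval q p)) ≤ (hval α p r : ℝ) / m * q ∧
    (α * qval α p (Lset r (bval q p)) = (hval α p r : ℝ) / m * q ↔
      (hval α p r : ℝ) * q = 0) := by
  rcases Nat.eq_zero_or_pos (tval α p (Lset r (bval q p))) with ht | ht
  · have hm0 : (m : ℝ) ≠ 0 := Nat.cast_ne_zero.2 (by omega)
    rw [qval, ht, Nat.cast_zero, zero_div, ite_self, mul_zero, div_mul_eq_mul_div,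
      eq_comm, div_eq_zero_iff, or_iff_left hm0]
    exact ⟨div_nonneg (mul_nonneg (Nat.cast_nonneg _) hq.1) m.cast_nonneg, Iff.rfl⟩
  · obtain ⟨hlt, hpos⟩ := mul_qval_Lset_bval_lt hα.1 hr (fun i j => hmono i j) ht
    exact ⟨hlt.le, iff_of_false hlt.ne hpos.ne'⟩

theorem stmt13
    (m : ℕ) (hm : 1 ≤ m) (α : ℝ) (hα : 0 ≤ α ∧ α ≤ 1)
    (p : Fin m → ℝ) (hp : ∀ i, 0 ≤ p i ∧ p i ≤ 1)
    (r : Fin m → Fin m) (hr : Function.Bijective r)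
    (hmono : ∀ i j : Fin m, i ≤ j → p (r i) ≤ p (r j))
    (q : ℝ) (hq : 0 ≤ q ∧ q ≤ 1) :
    α * qval α p (Lset r (bval q p)) ≤ (hval α p r : ℝ) / m * q ∧
    (α * qval α p (Lset r (bval q p)) = (hval α p r : ℝ) / m * q ↔
      (hval α p r : ℝ) * q = 0) :=
  stmt13_general m hm α hα p r hr hmono q hq
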